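/- A nonzero nondegenerate bimap B : U × V → W is nondegenerate-simple (every nondegenerate adjoint-morphism out of B is either zero or a monomorphism, equivalently has injective left component and surjective right component) if and only if B is a division bimap, i.e., u B v = 0 implies u = 0 or v = 0. -/
import Mathlib


open Function MulOpposite

universe u

structure Bimap (R S : Type*) (U V W : Type*) [Ring R] [Ring S]
    [AddCommGroup U] [AddCommGroup V] [AddCommGroup W]
    [Module R U] [Module Sᵐᵒᵖ V] [Module R W] [Module Sᵐᵒᵖ W] where
  toFun : U → V → W
  add_left : ∀ u u' v, toFun (u + u') v = toFun u v + toFun u' v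
  add_right : ∀ u v v', toFun u (v + v') = toFun u v + toFun u v'
  smul_left : ∀ (r : R) (u : U) (v : V), toFun (r • u) v = r • toFun u v
  smul_right : ∀ (s : Sᵐᵒᵖ) (u : U) (v : V), toFun u (s • v) = s • toFun u v

/-- `(f, g)` is an adjoint-morphism from `B` to `C`. -/
def IsAdjoint {R S U V U' V' W : Type*} [Ring R] [Ring S]
    [AddCommGroup U] [AddCommGroup V] [AddCommGroup U'] [AddCommGroup V']
    [AddCommGroup W]
    [Module R U] [Module Sᵐᵒᵖ V] [Module R U'] [Module Sᵐᵒᵖ V']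
    [Module R W] [Module Sᵐᵒᵖ W]
    (B : Bimap R S U V W) (C : Bimap R S U' V' W)
    (f : U →ₗ[R] U') (g : V' →ₗ[Sᵐᵒᵖ] V) : Prop :=
  ∀ (uu : U) (v' : V'), C.toFun (f uu) v' = B.toFun uu (g v')

variable {R S W : Type*} {U V : Type u} [Ring R] [Ring S]
  [AddCommGroup U] [AddCommGroup V] [AddCommGroup W]
  [Module R U] [Module Sᵐᵒᵖ V] [Module R W] [Module Sᵐᵒᵖ W]

theorem Bimap.zero_left (B : Bimap R S U V W) (v : V) : B.toFun 0 v = 0 := by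
  simpa using B.smul_left 0 0 v

theorem Bimap.zero_right (B : Bimap R S U V W) (u : U) : B.toFun u 0 = 0 := by
  simpa using B.smul_right 0 u 0

theorem stmt18 (B : Bimap R S U V W)
    (hne : ∃ (u : U) (v : V), B.toFun u v ≠ 0)
    (hBr : ∀ v : V, (∀ u : U, B.toFun u v = 0) → v = 0)
    (hBl : ∀ u : U, (∀ v : V, B.toFun u v = 0) → u = 0) :
    (∀ (U' V' : Type u) [AddCommGroup U'] [AddCommGroup V']
        [Module R U'] [Module Sᵐᵒᵖ V'] (C : Bimap R S U' V' W),
      (∀ v' : V', (∀ u' : U', C.toFun u' v' = 0) → v' = 0) →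
      (∀ u' : U', (∀ v' : V', C.toFun u' v' = 0) → u' = 0) →
      ∀ (f : U →ₗ[R] U') (g : V' →ₗ[Sᵐᵒᵖ] V), IsAdjoint B C f g →
        {v : V | ∀ u : U, f u = 0 → B.toFun u v = 0} = Set.range g →
        {u' : U' | ∀ v' : V', g v' = 0 → C.toFun u' v' = 0} = Set.range f →
        ((f = 0 ∧ g = 0) ∨ (Injective f ∧ Surjective g))) ↔
      (∀ (u : U) (v : V), B.toFun u v = 0 → u = 0 ∨ v = 0) := by
  constructor
  · -- simplicity → division
    intro h u₀ v₀ hB0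
    by_contra hcon
    push_neg at hcon
    obtain ⟨hu₀, hv₀⟩ := hcon
    -- A = left perp of v₀
    set A : Submodule R U :=
      { carrier := {u | B.toFun u v₀ = 0}
        add_mem' := fun ha hb => by
          simp only [Set.mem_setOf_eq] at *
          rw [B.add_left, ha, hb, add_zero]
        zero_mem' := B.zero_left v₀
        smul_mem' := fun r u hu => by
          simp only [Set.mem_setOf_eq] at *
          rw [B.smul_left, hu, smul_zero] } with hA
    have memA : ∀ u : U, u ∈ A ↔ B.toFun u v₀ = 0 := fun u => Iff.rfl
    set Ap : Submodule Sᵐᵒᵖ V :=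
      { carrier := {v | ∀ u ∈ A, B.toFun u v = 0}
        add_mem' := fun ha hb u hu => by
          rw [B.add_right, ha u hu, hb u hu, add_zero]
        zero_mem' := fun u _ => B.zero_right u
        smul_mem' := fun s v hv u hu => by
          rw [B.smul_right, hv u hu, smul_zero] } with hAp
    have memAp : ∀ v : V, v ∈ Ap ↔ ∀ u ∈ A, B.toFun u v = 0 := fun v => Iff.rfl
    have hv₀Ap : v₀ ∈ Ap := fun u hu => hu
    -- the linear map u ↦ B u v
    set Bv : V → (U →ₗ[R] W) := fun v =>
      { toFun := fun u => B.toFun u v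
        map_add' := fun a b => B.add_left a b v
        map_smul' := fun r a => B.smul_left r a v } with hBv
    have hker : ∀ v' : Ap, A ≤ LinearMap.ker (Bv (v' : V)) := by
      intro v' u hu
      exact v'.2 u hu
    set C : Bimap R S (U ⧸ A) Ap W :=
      { toFun := fun u' v' => A.liftQ (Bv (v' : V)) (hker v') u'
        add_left := fun a b v' => map_add _ a b
        add_right := fun u' v v' => by
          obtain ⟨u, rfl⟩ := A.mkQ_surjective u'
          simp only [Submodule.liftQ_apply, hBv, LinearMap.coe_mk, AddHom.coe_mk,
            Submodule.coe_add]
          exact B.add_right u v v'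
        smul_left := fun r a v' => map_smul _ r a
        smul_right := fun s u' v' => by
          obtain ⟨u, rfl⟩ := A.mkQ_surjective u'
          simp only [Submodule.liftQ_apply, hBv, LinearMap.coe_mk, AddHom.coe_mk,
            SetLike.val_smul]
          exact B.smul_right s u (v' : V) } with hC
    have hCapp : ∀ (u : U) (v' : Ap), C.toFun (A.mkQ u) v' = B.toFun u (v' : V) :=
      fun u v' => rfl
    have hCr : ∀ v' : Ap, (∀ u' : U ⧸ A, C.toFun u' v' = 0) → v' = 0 := by
      intro v' hv'
      have : (v' : V) = 0 := hBr _ (fun u => hv' (A.mkQ u))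
      exact Subtype.ext this
    have hCl : ∀ u' : U ⧸ A, (∀ v' : Ap, C.toFun u' v' = 0) → u' = 0 := by
      intro u' hu'
      obtain ⟨u, rfl⟩ := A.mkQ_surjective u'
      have huA : u ∈ A := hu' ⟨v₀, hv₀Ap⟩
      simpa [Submodule.Quotient.mk_eq_zero] using huA
    have hadj : IsAdjoint B C A.mkQ Ap.subtype := fun u v' => rfl
    have hleft : {v : V | ∀ u : U, A.mkQ u = 0 → B.toFun u v = 0} = Set.range Ap.subtype := by
      ext v
      simp only [Set.mem_setOf_eq, Submodule.coe_subtype, Submodule.range_subtype,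
        Submodule.mkQ_apply, Submodule.Quotient.mk_eq_zero]
      constructor
      · intro hv
        exact ⟨⟨v, fun u hu => hv u hu⟩, rfl⟩
      · rintro ⟨⟨w, hw⟩, rfl⟩ u hu
        exact hw u hu
    have hright : {u' : U ⧸ A | ∀ v' : Ap, Ap.subtype v' = 0 → C.toFun u' v' = 0}
        = Set.range A.mkQ := by
      have h1 : {u' : U ⧸ A | ∀ v' : Ap, Ap.subtype v' = 0 → C.toFun u' v' = 0} = Set.univ := by
        ext u'
        simp only [Set.mem_setOf_eq, Set.mem_univ, iff_true]
        intro v' hv'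
        have : v' = 0 := Subtype.ext hv'
        subst this
        obtain ⟨u, rfl⟩ := A.mkQ_surjective u'
        show B.toFun u ((0 : Ap) : V) = 0
        simpa using B.zero_right u
      rw [h1]
      exact (Set.range_eq_univ.mpr A.mkQ_surjective).symm
    rcases h (U ⧸ A) Ap C hCr hCl A.mkQ Ap.subtype hadj hleft hright with ⟨_, hg0⟩ | ⟨hinj, _⟩
    · have : (⟨v₀, hv₀Ap⟩ : Ap) = (0 : Ap) := by
        have := congrArg (fun k : Ap →ₗ[Sᵐᵒᵖ] V => k ⟨v₀, hv₀Ap⟩) hg0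
        exact Subtype.ext (by simpa using this)
      exact hv₀ (congrArg Subtype.val this)
    · have : A.mkQ u₀ = A.mkQ 0 := by
        simp only [map_zero, Submodule.mkQ_apply, Submodule.Quotient.mk_eq_zero]
        exact hB0
      exact hu₀ (hinj this)
  · -- division → simplicity
    intro hdiv U' V' _ _ _ _ C hCr hCl f g hadj hleft hright
    by_cases hg : g = 0
    · left
      refine ⟨?_, hg⟩
      ext u
      refine hCl (f u) (fun v' => ?_)
      rw [hadj u v', hg]
      simpa using B.zero_right u
    · right
      have hker : ∀ u : U, f u = 0 → u = 0 := by
        intro u hfu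
        by_contra hu
        refine hg (LinearMap.ext fun v' => ?_)
        have hmem : g v' ∈ {v : V | ∀ u : U, f u = 0 → B.toFun u v = 0} := by
          rw [hleft]; exact Set.mem_range_self v'
        rcases hdiv u (g v') (hmem u hfu) with h | h
        · exact absurd h hu
        · simpa using h
      constructor
      · exact (injective_iff_map_eq_zero f).mpr hker
      · intro v
        have hmem : v ∈ {v : V | ∀ u : U, f u = 0 → B.toFun u v = 0} := by
          intro u hu
          rw [hker u hu]
          exact B.zero_left v
        rw [hleft] at hmem
        exact hmem
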